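/- Let d ≥ 2 be an integer and define e(ℓ, m) = d² − ℓ² − m for integers ℓ, m with 0 ≤ ℓ ≤ d−2 and 0 ≤ m ≤ 2d−2. Then the image of the function e contains every integer in the interval [2d−2, d²]. -/

import Mathlib

/-!
Put `k = d - 2` and `n = d² - e`, so `0 ≤ n ≤ (k + 1)² + 1`; we must write `n = ℓ² + m` with
`0 ≤ ℓ ≤ k` and `0 ≤ m ≤ 2k + 2`. Take `ℓ = ⌊√n⌋` when this is at most `k`, so that
`m = n - ℓ² ≤ 2ℓ`; otherwise `(k + 1)² ≤ n`, and `ℓ = k` leaves `m = n - k² ∈ [2k + 1, 2k + 2]`.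
-/

namespace Int

theorem sqrt_sq_le {n : ℤ} (hn : 0 ≤ n) : sqrt n ^ 2 ≤ n := by
  lift n to ℕ using hn
  rw [sqrt_natCast]
  exact_mod_cast Nat.sqrt_le' n

theorem lt_sqrt_add_one_sq (n : ℤ) : n < (sqrt n + 1) ^ 2 := by
  rcases lt_or_ge n 0 with hn | hn
  · nlinarith [sqrt_nonneg n]
  lift n to ℕ using hn
  rw [sqrt_natCast]
  exact_mod_cast Nat.lt_succ_sqrt' n

theorem exists_eq_sq_add_of_le {k n : ℤ} (hk : 0 ≤ k) (hn : 0 ≤ n) (hnk : n ≤ (k + 1) ^ 2 + 1) :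
    ∃ ℓ m : ℤ, 0 ≤ ℓ ∧ ℓ ≤ k ∧ 0 ≤ m ∧ m ≤ 2 * k + 2 ∧ n = ℓ ^ 2 + m := by
  have hsq := sqrt_sq_le hn
  have hlt := lt_sqrt_add_one_sq n
  by_cases hs : sqrt n ≤ k
  · exact ⟨sqrt n, n - sqrt n ^ 2, sqrt_nonneg n, hs, by linarith, by nlinarith, by ring⟩
  · have hk_sq : (k + 1) ^ 2 ≤ sqrt n ^ 2 := by gcongr; omega
    exact ⟨k, n - k ^ 2, hk, le_rfl, by nlinarith, by nlinarith, by ring⟩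

end Int

/-- For d ≥ 2 and e(ℓ,m) = d² − ℓ² − m with 0 ≤ ℓ ≤ d−2, 0 ≤ m ≤ 2d−2, the image of e
contains every integer in [2d−2, d²]. -/
theorem stmt_3 (d : ℤ) (hd : 2 ≤ d) :
    ∀ e : ℤ, 2 * d - 2 ≤ e → e ≤ d ^ 2 →
      ∃ ℓ m : ℤ, 0 ≤ ℓ ∧ ℓ ≤ d - 2 ∧ 0 ≤ m ∧ m ≤ 2 * d - 2 ∧
        e = d ^ 2 - ℓ ^ 2 - m := by
  intro e he_ge he_le
  obtain ⟨ℓ, m, hℓ₀, hℓ, hm₀, hm, hsum⟩ :=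
    Int.exists_eq_sq_add_of_le (k := d - 2) (n := d ^ 2 - e) (by omega) (by omega)
      (by nlinarith)
  exact ⟨ℓ, m, hℓ₀, hℓ, hm₀, by omega, by omega⟩
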